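/- Under the hypotheses m_A, m_C, Δm > 0, Δm < m_A, m'_A = m_A − Δm, m'_C = m_C + Δm, p_A, p_C ∈ R², the kinetic-energy conservation equation (1/m_A)‖p_A‖² + (1/m_C)‖p_C‖² = (1/m'_A)‖p_A − Δp‖² + (1/m'_C)‖p_C + Δp‖² admits a solution Δp ∈ R². -/

import Mathlib

open scoped RealInnerProductSpace

noncomputable section

abbrev E2 := EuclideanSpace ℝ (Fin 2)

/-! With total momentum `s = p_A + p_C` fixed and total mass `m_A + m_C = m'_A + m'_C`, the energy
`‖x‖² / a + ‖y‖² / c` of momenta `x + y = s` splits as the energy `‖s‖² / (a + c)` of the centre of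
mass plus a term proportional to `‖c • x - a • y‖²`.  Hence the initial energy is at least
`‖s‖² / (m'_A + m'_C)`, and the transfer `Δp` only has to give `c • x - a • y` a prescribed norm,
which a suitable vector of the right length does. -/

section TwoBodyEnergy

variable {E : Type*} [NormedAddCommGroup E] [InnerProductSpace ℝ E] {a c : ℝ}

theorem one_div_mul_norm_sq_add_one_div_mul_norm_sq (ha : 0 < a) (hc : 0 < c) (x y : E) :
    1 / a * ‖x‖ ^ 2 + 1 / c * ‖y‖ ^ 2 =
      ‖x + y‖ ^ 2 / (a + c) + ‖c • x - a • y‖ ^ 2 / (a * c * (a + c)) := by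
  rw [norm_add_sq_real, norm_sub_sq_real, norm_smul, norm_smul, real_inner_smul_left,
    real_inner_smul_right, Real.norm_of_nonneg ha.le, Real.norm_of_nonneg hc.le]
  field_simp
  ring

theorem norm_add_sq_div_le (ha : 0 < a) (hc : 0 < c) (x y : E) :
    ‖x + y‖ ^ 2 / (a + c) ≤ 1 / a * ‖x‖ ^ 2 + 1 / c * ‖y‖ ^ 2 := by
  rw [one_div_mul_norm_sq_add_one_div_mul_norm_sq ha hc]
  exact le_add_of_nonneg_right (by positivity)

theorem exists_one_div_mul_norm_sq_sub_add_eq [Nontrivial E] (ha : 0 < a) (hc : 0 < c)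
    (p q : E) {K : ℝ} (hK : ‖p + q‖ ^ 2 / (a + c) ≤ K) :
    ∃ d : E, 1 / a * ‖p - d‖ ^ 2 + 1 / c * ‖q + d‖ ^ 2 = K := by
  have hac : 0 < a * c * (a + c) := by positivity
  set r := Real.sqrt ((K - ‖p + q‖ ^ 2 / (a + c)) * (a * c * (a + c)))
  have hr : r ^ 2 = (K - ‖p + q‖ ^ 2 / (a + c)) * (a * c * (a + c)) :=
    Real.sq_sqrt (mul_nonneg (by linarith) hac.le)
  obtain ⟨w, hw⟩ := exists_norm_eq E (Real.sqrt_nonneg _ : 0 ≤ r)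
  set d := (a + c)⁻¹ • (c • p - a • q - w)
  have hd : (a + c) • d = c • p - a • q - w := smul_inv_smul₀ (by positivity) _
  have hdiff : c • (p - d) - a • (q + d) = w := by
    rw [show c • (p - d) - a • (q + d) = c • p - a • q - (a + c) • d by module, hd]
    abel
  refine ⟨d, ?_⟩
  rw [one_div_mul_norm_sq_add_one_div_mul_norm_sq ha hc, sub_add_add_cancel, hdiff, hw, hr]
  field_simp
  ring

end TwoBodyEnergy

theorem stmt_5 (mA mC dm : ℝ) (hmA : 0 < mA) (hmC : 0 < mC) (hdm : 0 < dm)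
    (hlt : dm < mA) (mA' mC' : ℝ) (hA' : mA' = mA - dm) (hC' : mC' = mC + dm)
    (pA pC : E2) :
    ∃ dp : E2,
      (1 / mA) * ‖pA‖ ^ 2 + (1 / mC) * ‖pC‖ ^ 2 =
        (1 / mA') * ‖pA - dp‖ ^ 2 + (1 / mC') * ‖pC + dp‖ ^ 2 := by
  have hA'pos : 0 < mA' := by linarith
  have hC'pos : 0 < mC' := by linarith
  have htotal : mA' + mC' = mA + mC := by rw [hA', hC']; ring
  obtain ⟨dp, hdp⟩ := exists_one_div_mul_norm_sq_sub_add_eq hA'pos hC'pos pA pC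
    (K := 1 / mA * ‖pA‖ ^ 2 + 1 / mC * ‖pC‖ ^ 2)
    (htotal ▸ norm_add_sq_div_le hmA hmC pA pC)
  exact ⟨dp, hdp.symm⟩
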